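/- arXiv:1112.4961 — 2 statements merged into one kernel-verified Lean document; each statement's English description precedes it below -/
import Mathlib

section
/- Let H be the polynomial Hopf algebra ℚ[Q₁, Q₂, ...] graded with deg Qᵢ = dᵢ and each Qᵢ primitive. An element x of degree m ≥ d is a near-primitive of order d if and only if x lies in the span of monomials in the Qᵢ all of whose proper monomial factors have degree strictly less than d; equivalently, the degree-m component of the space of order-d near-primitives equals the degree-m part of ℚ[Qᵢ : m − d < dᵢ < d] ⊕ ℚ·{primitives of degree m}. -/
/- Classification of near-primitives in the polynomial Hopf algebra
H = ℚ[Q₁, Q₂, ...] on primitive generators `X i` of positive degrees `w i`.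
A homogeneous element x of degree m ≥ d is a near-primitive of order d
(meaning Δ(x) − 1 ⊗ x lies in H ⊗ H^{<d}) iff x lies in the span of the
degree-m monomials all of whose proper monomial factors have degree < d. -/

open MvPolynomial TensorProduct

noncomputable section

abbrev H : Type := MvPolynomial ℕ ℚ

def comulP : H →ₐ[ℚ] H ⊗[ℚ] H := aeval fun i => X i ⊗ₜ[ℚ] 1 + 1 ⊗ₜ[ℚ] X i

def D (w : ℕ → ℕ) (f : ℕ →₀ ℕ) : ℕ := f.sum fun i e => w i * e

/-- The subspace H ⊗ H^{<d} of the tensor square. -/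
def TL (w : ℕ → ℕ) (d : ℕ) : Submodule ℚ (H ⊗[ℚ] H) :=
  Submodule.span ℚ {t | ∃ a b : H, (∃ m < d, IsWeightedHomogeneous w b m) ∧ t = a ⊗ₜ[ℚ] b}

/-- x is a near-primitive of order d: (id ⊗ proj_{≥d})Δ(x) = 1 ⊗ x, i.e.
Δ(x) − 1 ⊗ x ∈ H ⊗ H^{<d}. -/
def NearPrim (w : ℕ → ℕ) (d : ℕ) (x : H) : Prop := comulP x - 1 ⊗ₜ[ℚ] x ∈ TL w d

/-! In the monomial basis of `H ⊗ H`, `Δ(X^f) = ∑_{a + b = f} (∏ᵢ C(fᵢ, aᵢ)) X^a ⊗ X^b`, so the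
coefficient of `X^a ⊗ X^b` in `Δx - 1 ⊗ x` vanishes for `a = 0` and is `C(a + b, a) · coeff_{a+b} x`
otherwise. Lying in `H ⊗ H^{<d}` means that every coefficient with `deg b ≥ d` vanishes, and the
binomial coefficients are nonzero over `ℚ`; hence `x` is a near-primitive of order `d` iff no
monomial `X^f` of `x` has a factor `X^b` with `b ≠ f` and `deg b ≥ d` (`b = 0` never qualifies
since `d ≥ 1`). -/

open Finset.HasAntidiagonal

lemma MvPolynomial.span_setOf_monomial {R σ : Type*} [CommSemiring R] (P : (σ →₀ ℕ) → Prop) :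
    Submodule.span R {q : MvPolynomial σ R | ∃ f, q = monomial f 1 ∧ P f} =
      restrictSupport R {f | P f} := by
  rw [restrictSupport_eq_span]
  congr 1
  ext q
  simp [eq_comm, and_comm]

namespace Finsupp

theorem sum_antidiagonal_single_add {α M : Type*} [DecidableEq α] [AddCommMonoid M]
    {i : α} {f : α →₀ ℕ} (hi : f i = 0) (e : ℕ) (F : (α →₀ ℕ) × (α →₀ ℕ) → M) :
    ∑ p ∈ antidiagonal (single i e + f), F p =
      ∑ k ∈ antidiagonal e, ∑ q ∈ antidiagonal f, F (single i k.1 + q.1, single i k.2 + q.2) := by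
  rw [← Finset.sum_product']
  refine (Finset.sum_nbij'
    (fun kq : (ℕ × ℕ) × (α →₀ ℕ) × (α →₀ ℕ) =>
      (single i kq.1.1 + kq.2.1, single i kq.1.2 + kq.2.2))
    (fun p : (α →₀ ℕ) × (α →₀ ℕ) => ((p.1 i, p.2 i), (p.1.erase i, p.2.erase i)))
    ?_ ?_ ?_ ?_ fun _ _ => rfl).symm
  · rintro ⟨⟨k, l⟩, a, b⟩ h
    simp only [Finset.mem_product, mem_antidiagonal] at h ⊢
    rw [add_add_add_comm, ← single_add, h.1, h.2]
  · rintro ⟨a, b⟩ h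
    simp only [Finset.mem_product, mem_antidiagonal] at h ⊢
    constructor
    · simpa [hi] using DFunLike.congr_fun h i
    · rw [← erase_add, h, erase_add, erase_single, erase_of_notMem_support (by simpa), zero_add]
  · rintro ⟨⟨k, l⟩, a, b⟩ h
    simp only [Finset.mem_product, mem_antidiagonal] at h
    obtain ⟨ha, hb⟩ : a i = 0 ∧ b i = 0 := by simpa [hi] using DFunLike.congr_fun h.2 i
    simp [ha, hb, erase_add, erase_of_notMem_support]
  · rintro ⟨a, b⟩ _
    simp [single_add_erase]

end Finsupp

lemma D_eq_weight (w : ℕ → ℕ) (f : ℕ →₀ ℕ) : D w f = Finsupp.weight w f := by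
  rw [Finsupp.weight_apply, D]
  exact Finsupp.sum_congr fun i _ => mul_comm _ _

@[simp]
lemma D_zero (w : ℕ → ℕ) : D w 0 = 0 := by
  simp [D]

section multiBinomial

variable {α : Type*}

def multiBinomial (f a : α →₀ ℕ) : ℕ := f.prod fun i n => n.choose (a i)

lemma multiBinomial_pos {f a : α →₀ ℕ} (h : a ≤ f) : 0 < multiBinomial f a :=
  Finset.prod_pos fun i _ => Nat.choose_pos (h i)

@[simp]
lemma multiBinomial_zero_right (f : α →₀ ℕ) : multiBinomial f 0 = 1 := by
  simp [multiBinomial]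

lemma multiBinomial_single_add {i : α} {e : ℕ} (he : e ≠ 0) {f a : α →₀ ℕ} (hf : f i = 0)
    (ha : a i = 0) (k : ℕ) :
    multiBinomial (Finsupp.single i e + f) (Finsupp.single i k + a) =
      e.choose k * multiBinomial f a := by
  have hdisj : Disjoint (Finsupp.single i e).support f.support := by
    simp [Finsupp.support_single i he, hf]
  rw [multiBinomial, Finsupp.prod_add_index_of_disjoint hdisj, Finsupp.prod,
    Finsupp.support_single i he, Finset.prod_singleton]
  congr 1
  · simp [ha]
  · refine Finsupp.prod_congr fun j hj => ?_
    have hji : i ≠ j := by rintro rfl; simp_all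
    simp [hji]

end multiBinomial

lemma comulP_X_pow (i e : ℕ) :
    comulP (X i ^ e) =
      ∑ k ∈ antidiagonal e, (e.choose k.1 : ℚ) • ((X i ^ k.1 : H) ⊗ₜ[ℚ] (X i ^ k.2 : H)) := by
  have hcomm : Commute ((X i : H) ⊗ₜ[ℚ] (1 : H)) ((1 : H) ⊗ₜ[ℚ] X i) := by
    simp [Commute, SemiconjBy, Algebra.TensorProduct.tmul_mul_tmul]
  rw [map_pow, comulP, aeval_X, hcomm.add_pow']
  refine Finset.sum_congr rfl fun k _ => ?_
  rw [Nat.cast_smul_eq_nsmul, Algebra.TensorProduct.tmul_pow, Algebra.TensorProduct.tmul_pow,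
    Algebra.TensorProduct.tmul_mul_tmul, one_pow, one_pow, mul_one, one_mul]

lemma comulP_monomial (f : ℕ →₀ ℕ) :
    comulP (monomial f 1) = ∑ p ∈ antidiagonal f,
      (multiBinomial f p.1 : ℚ) • (monomial p.1 (1 : ℚ) ⊗ₜ[ℚ] monomial p.2 (1 : ℚ)) := by
  induction f using Finsupp.induction with
  | zero => simp [Algebra.TensorProduct.one_def]
  | single_add i e f hi he ih =>
    rw [Finsupp.notMem_support_iff] at hi
    rw [monomial_single_add, map_mul, comulP_X_pow, ih, Finset.sum_mul_sum,
      Finsupp.sum_antidiagonal_single_add hi]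
    refine Finset.sum_congr rfl fun k hk => Finset.sum_congr rfl fun q hq => ?_
    rw [mem_antidiagonal] at hk hq
    obtain ⟨hq1, -⟩ : q.1 i = 0 ∧ q.2 i = 0 := by simpa [hi] using congr($hq i)
    rw [multiBinomial_single_add he hi hq1, smul_mul_smul_comm,
      Algebra.TensorProduct.tmul_mul_tmul, monomial_single_add, monomial_single_add, Nat.cast_mul]

abbrev monomialTensorBasis : Module.Basis ((ℕ →₀ ℕ) × (ℕ →₀ ℕ)) ℚ (H ⊗[ℚ] H) :=
  (basisMonomials ℕ ℚ).tensorProduct (basisMonomials ℕ ℚ)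

lemma monomialTensorBasis_repr_tmul (p q : H) (a b : ℕ →₀ ℕ) :
    monomialTensorBasis.repr (p ⊗ₜ q) (a, b) = coeff a p * coeff b q := by
  simp only [Module.Basis.tensorProduct_repr_tmul_apply, smul_eq_mul, mul_comm]
  rfl

lemma mem_TL_iff {w : ℕ → ℕ} {d : ℕ} {t : H ⊗[ℚ] H} :
    t ∈ TL w d ↔ ∀ a b : ℕ →₀ ℕ, d ≤ D w b → monomialTensorBasis.repr t (a, b) = 0 := by
  constructor
  · intro ht a b hb
    induction ht using Submodule.span_induction with
    | mem t ht =>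
      obtain ⟨p, q, ⟨m, hm, hq⟩, rfl⟩ := ht
      rw [monomialTensorBasis_repr_tmul, mul_eq_zero]
      by_contra! h
      have := hq h.2
      rw [← D_eq_weight] at this
      omega
    | zero => simp
    | add _ _ _ _ h₁ h₂ => simp [h₁, h₂]
    | smul _ _ _ h => simp [h]
  · intro h
    rw [← monomialTensorBasis.linearCombination_repr t, Finsupp.linearCombination_apply]
    refine Submodule.finsuppSum_mem _ _ _ _ fun ⟨a, b⟩ hab =>
      Submodule.smul_mem _ _ (Submodule.subset_span ?_)
    refine ⟨monomial a 1, monomial b 1, ⟨D w b, ?_, ?_⟩, by simp⟩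
    · by_contra! hb
      exact hab (h a b hb)
    · exact isWeightedHomogeneous_monomial _ _ _ (D_eq_weight w b).symm

lemma monomialTensorBasis_repr_comulP_monomial (f a b : ℕ →₀ ℕ) :
    monomialTensorBasis.repr (comulP (monomial f 1)) (a, b) =
      if a + b = f then (multiBinomial f a : ℚ) else 0 := by
  simp only [comulP_monomial, map_sum, map_smul, Finsupp.coe_finsetSum, Finset.sum_apply,
    Finsupp.smul_apply, monomialTensorBasis_repr_tmul, coeff_monomial, smul_eq_mul, mul_ite,
    mul_one, mul_zero, ← ite_and]
  have key := Finset.sum_ite_eq' (antidiagonal f) (a, b) fun c => (multiBinomial f c.1 : ℚ)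
  simp only [mem_antidiagonal] at key
  rw [← key]
  exact Finset.sum_congr rfl fun c _ => by simp [Prod.ext_iff, and_comm]

lemma monomialTensorBasis_repr_comulP (x : H) (a b : ℕ →₀ ℕ) :
    monomialTensorBasis.repr (comulP x) (a, b) = multiBinomial (a + b) a * coeff (a + b) x := by
  induction x using MvPolynomial.induction_on' with
  | monomial f r =>
    rw [← mul_one r, ← smul_eq_mul, ← smul_monomial, map_smul, map_smul, Finsupp.smul_apply,
      monomialTensorBasis_repr_comulP_monomial, coeff_smul, coeff_monomial]
    split_ifs <;> simp_all [mul_comm]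
  | add p q hp hq => simp [hp, hq, mul_add]

lemma nearPrim_iff_coeff_eq_zero {w : ℕ → ℕ} {d : ℕ} {x : H} :
    NearPrim w d x ↔ ∀ a b : ℕ →₀ ℕ, a ≠ 0 → d ≤ D w b → coeff (a + b) x = 0 := by
  rw [NearPrim, mem_TL_iff]
  refine forall_congr' fun a => forall_congr' fun b => ?_
  rw [map_sub, Finsupp.sub_apply, monomialTensorBasis_repr_comulP, monomialTensorBasis_repr_tmul,
    coeff_one, sub_eq_zero]
  rcases eq_or_ne a 0 with rfl | ha
  · simp
  · have hpos : (multiBinomial (a + b) a : ℚ) ≠ 0 := by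
      exact_mod_cast (multiBinomial_pos le_self_add).ne'
    simp [ha, Ne.symm ha, hpos]

theorem near_primitive_classification_general (w : ℕ → ℕ)
    (d m : ℕ) (hd : 1 ≤ d) (x : H) (hx : IsWeightedHomogeneous w x m) :
    NearPrim w d x ↔
      x ∈ Submodule.span ℚ {q : H | ∃ f : ℕ →₀ ℕ, q = monomial f 1 ∧ D w f = m ∧
        ∀ g : ℕ →₀ ℕ, g ≤ f → g ≠ 0 → g ≠ f → D w g < d} := by
  rw [nearPrim_iff_coeff_eq_zero, MvPolynomial.span_setOf_monomial, mem_restrictSupport_iff]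
  constructor
  · intro h f hf
    refine ⟨(D_eq_weight w f).trans (hx (mem_support_iff.1 hf)), fun g hgf _ hgf' => ?_⟩
    by_contra! hdg
    obtain ⟨a, rfl⟩ := exists_add_of_le hgf
    exact mem_support_iff.1 hf (add_comm g a ▸ h a g (by rintro rfl; simp at hgf') hdg)
  · intro h a b ha hb
    by_contra hab
    have hb0 : b ≠ 0 := by rintro rfl; simp at hb; omega
    have hba : b ≠ a + b := by simpa [eq_comm] using ha
    have := (h (mem_support_iff.2 hab)).2 b le_add_self hb0 hba
    omega

theorem near_primitive_classification (w : ℕ → ℕ) (hw : ∀ i, 0 < w i)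
    (d m : ℕ) (hd : 1 ≤ d) (hm : d ≤ m) (x : H) (hx : IsWeightedHomogeneous w x m) :
    NearPrim w d x ↔
      x ∈ Submodule.span ℚ {q : H | ∃ f : ℕ →₀ ℕ, q = monomial f 1 ∧ D w f = m ∧
        ∀ g : ℕ →₀ ℕ, g ≤ f → g ≠ 0 → g ≠ f → D w g < d} :=
  near_primitive_classification_general w d m hd x hx

end
end

section
/- Let H = ℚ[Q₁, Q₂, ...] with primitive generators, deg Qᵢ > 0. If a generator Q_j has degree e with m − d < e and e < d and 2e = m, then Q_j² is a near-primitive of order d of degree m that is not primitive. -/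
/- In H = ℚ[Q₁, Q₂, ...] with primitive generators `X i` of positive degrees `w i`:
if a generator Q_j has degree e with m − d < e, e < d and 2e = m, then Q_j² is a
near-primitive of order d, homogeneous of degree m, and is not primitive. -/

open MvPolynomial TensorProduct

noncomputable section

theorem square_of_generator_is_near_primitive_not_primitive
    (w : ℕ → ℕ) (hw : ∀ i, 0 < w i) (d m j : ℕ)
    (h1 : m < d + w j) (h2 : w j < d) (h3 : 2 * w j = m) :
    IsWeightedHomogeneous w ((X j : H) ^ 2) m ∧
    NearPrim w d ((X j : H) ^ 2) ∧
    comulP ((X j : H) ^ 2) ≠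
      ((X j : H) ^ 2) ⊗ₜ[ℚ] 1 + 1 ⊗ₜ[ℚ] ((X j : H) ^ 2) := by
  refine ⟨?_, ?_, ?_⟩
  · have := (isWeightedHomogeneous_X ℚ w j).mul (isWeightedHomogeneous_X ℚ w j)
    rw [← pow_two] at this
    have hm : w j + w j = m := by omega
    rwa [hm] at this
  · unfold NearPrim
    have key : comulP ((X j : H) ^ 2) - 1 ⊗ₜ[ℚ] ((X j : H) ^ 2) =
        ((X j : H) ^ 2) ⊗ₜ[ℚ] (1 : H) + (2 : ℚ) • ((X j : H) ⊗ₜ[ℚ] (X j : H)) := by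
      simp only [comulP, map_pow, aeval_X]
      simp only [pow_two]
      rw [add_mul, mul_add, mul_add]
      simp only [Algebra.TensorProduct.tmul_mul_tmul, one_mul, mul_one]
      rw [TensorProduct.smul_tmul', two_smul ℚ, add_tmul]
      abel
    rw [key]
    refine Submodule.add_mem _ ?_ (Submodule.smul_mem _ _ ?_)
    · exact Submodule.subset_span ⟨_, 1, ⟨0, lt_of_le_of_lt (Nat.zero_le _) h2,
        isWeightedHomogeneous_one ℚ w⟩, rfl⟩
    · exact Submodule.subset_span ⟨_, _, ⟨w j, h2, isWeightedHomogeneous_X ℚ w j⟩, rfl⟩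
  · intro h
    have hφ := congrArg ((Algebra.TensorProduct.lmul' ℚ (S := ℚ)).comp
      (Algebra.TensorProduct.map (aeval (fun _ : ℕ => (1 : ℚ)) : H →ₐ[ℚ] ℚ) (aeval (fun _ : ℕ => (1 : ℚ)) : H →ₐ[ℚ] ℚ))) h
    simp only [comulP, map_pow, map_add, AlgHom.comp_apply,
      Algebra.TensorProduct.map_tmul, Algebra.TensorProduct.lmul'_apply_tmul,
      aeval_X, map_one, one_mul, mul_one] at hφ
    norm_num at hφ
end
end
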